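/- arXiv:math-ph/0608059 — 4 statements merged into one kernel-verified Lean document; each statement's English description precedes it below -/
import Mathlib

section
/- For N(t) = [[t, -1], [t², -t]] and ε > 0, the solution Y(t,0) of ε Y'(t) = N(t) Y(t), Y(0) = I, is given explicitly by Y(t,0) = [[cosh(t/√ε), -(1/√ε) sinh(t/√ε)], [t cosh(t/√ε) - √ε sinh(t/√ε), cosh(t/√ε) - (t/√ε) sinh(t/√ε)]]. -/
/-!
Write a column of `Y` as `(a, b)` and put `c = b - t a`. This gauge change removes the time
dependence: `ε a' = -c` and `c' = -a`. Along the eigendirections `a ∓ c / √ε` the system reads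
`u' = ± u / √ε`, so both combinations are exponentials fixed by their initial values, and
recombining them gives `cosh` and `sinh`.
-/

open Real

lemma eq_mul_exp_of_hasDerivAt {f : ℝ → ℝ} {k : ℝ} (hf : ∀ t, HasDerivAt f (k * f t) t)
    (t : ℝ) : f t = f 0 * exp (k * t) := by
  have hg : ∀ t, HasDerivAt (fun u => f u * exp (-k * u)) 0 t := fun t =>
    ((hf t).mul ((hasDerivAt_id t).const_mul (-k)).exp).congr_deriv (by simp only [id]; ring)
  have hconst := is_const_of_deriv_eq_zero (fun x => (hg x).differentiableAt)
    (fun x => (hg x).deriv) t 0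
  simp only [mul_zero, exp_zero, mul_one] at hconst
  rw [← hconst, mul_assoc, ← exp_add, neg_mul, neg_add_cancel, exp_zero, mul_one]

lemma hyperbolic_system_eq_cosh_sinh {a c : ℝ → ℝ} {s : ℝ} (hs : s ≠ 0)
    (ha : ∀ t, HasDerivAt a (-c t / s ^ 2) t) (hc : ∀ t, HasDerivAt c (-a t) t) (t : ℝ) :
    a t = a 0 * cosh (t / s) - c 0 / s * sinh (t / s) ∧
      c t = c 0 * cosh (t / s) - s * a 0 * sinh (t / s) := by
  have hp := eq_mul_exp_of_hasDerivAt (f := fun u => a u - c u / s) (k := 1 / s)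
    (fun t => ((ha t).sub ((hc t).div_const s)).congr_deriv (by field_simp; ring)) t
  have hq := eq_mul_exp_of_hasDerivAt (f := fun u => a u + c u / s) (k := -(1 / s))
    (fun t => ((ha t).add ((hc t).div_const s)).congr_deriv (by field_simp; ring)) t
  rw [show 1 / s * t = t / s by ring] at hp
  rw [show -(1 / s) * t = -(t / s) by ring] at hq
  field_simp at hp hq
  rw [cosh_eq, sinh_eq]
  constructor
  · field_simp
    linear_combination hp + hq
  · linear_combination (hq - hp) / 2

lemma nilpotent_system_eq_cosh_sinh {ε : ℝ} (hε : 0 < ε) {a b : ℝ → ℝ}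
    (ha : ∀ t, HasDerivAt a (ε⁻¹ * (t * a t - b t)) t)
    (hb : ∀ t, HasDerivAt b (ε⁻¹ * (t ^ 2 * a t - t * b t)) t) (t : ℝ) :
    a t = a 0 * cosh (t / √ε) - b 0 / √ε * sinh (t / √ε) ∧
      b t = t * a t + (b 0 * cosh (t / √ε) - √ε * a 0 * sinh (t / √ε)) := by
  have hc : ∀ t, HasDerivAt (fun u => b u - u * a u) (-a t) t := fun t =>
    ((hb t).sub ((hasDerivAt_id t).mul (ha t))).congr_deriv (by simp only [id]; field_simp; ring)
  have ha' : ∀ t, HasDerivAt a (-(b t - t * a t) / √ε ^ 2) t := fun t =>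
    (ha t).congr_deriv (by rw [sq_sqrt hε.le]; ring)
  obtain ⟨hat, hct⟩ := hyperbolic_system_eq_cosh_sinh (sqrt_pos.2 hε).ne' ha' hc t
  simp only [zero_mul, sub_zero] at hat hct
  exact ⟨hat, by linarith⟩

/-- For `N(t) = [[t, -1], [t², -t]]` and `ε > 0`, the solution of
`ε Y'(t) = N(t) Y(t)`, `Y(0) = I`, is given explicitly in terms of `cosh` and `sinh`. -/
theorem stmt7 (ε : ℝ) (hε : 0 < ε) (Y : ℝ → Matrix (Fin 2) (Fin 2) ℝ)
    (hinit : Y 0 = 1)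
    (hode : ∀ (t : ℝ) (i j : Fin 2), HasDerivAt (fun u => Y u i j)
      (ε⁻¹ * (((!![t, -1; t ^ 2, -t] : Matrix (Fin 2) (Fin 2) ℝ) * Y t) i j)) t) :
    ∀ t : ℝ, Y t =
      !![Real.cosh (t / Real.sqrt ε), -(1 / Real.sqrt ε) * Real.sinh (t / Real.sqrt ε);
        t * Real.cosh (t / Real.sqrt ε) - Real.sqrt ε * Real.sinh (t / Real.sqrt ε),
        Real.cosh (t / Real.sqrt ε) - (t / Real.sqrt ε) * Real.sinh (t / Real.sqrt ε)] := by
  have hcol (j : Fin 2) := nilpotent_system_eq_cosh_sinh hε (a := fun u => Y u 0 j)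
    (b := fun u => Y u 1 j)
    (fun t => by simpa [Matrix.mul_apply, Fin.sum_univ_two, sub_eq_add_neg] using hode t 0 j)
    (fun t => by simpa [Matrix.mul_apply, Fin.sum_univ_two, sub_eq_add_neg] using hode t 1 j)
  intro t
  obtain ⟨h00, h10⟩ := hcol 0 t
  obtain ⟨h01, h11⟩ := hcol 1 t
  simp only [hinit, Matrix.one_apply_eq, Matrix.one_apply_ne, ne_eq, zero_ne_one,
    one_ne_zero, not_false_eq_true] at h00 h10 h01 h11
  ext i j
  fin_cases i <;> fin_cases j <;> simp [h00, h10, h01, h11] <;> ring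
end

section
/- For N(t) = [[t, -1], [t², -t]], the solution Y(t,0) of ε Y' = N(t) Y, Y(0)=I, satisfies ‖Y(t,0)‖ ≥ (1/√ε) sinh(t/√ε) for t > 0; in particular ‖Y(t,0)‖ → ∞ as ε → 0⁺ for any fixed t > 0, growing at least like e^{t/√ε}/(2√ε). -/
open Filter
open scoped Topology

attribute [local instance] Matrix.linftyOpNormedAddCommGroup

/-!
The substitution `v = Y₁₁ - t Y₀₁` turns the equation for the second column of `Y` into a
system with constant coefficients, whose solution gives `Y₀₁(t) = -sinh(t/√ε)/√ε` exactly.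
The ℓ∞ operator norm dominates the absolute values of the entries, and `sinh x ≥ x`,
`sinh x ≥ (eˣ - 1)/2` for `x ≥ 0` give the remaining bounds.
-/

theorem Matrix.norm_entry_le_linfty_opNorm {m n α : Type*} [Fintype m] [Fintype n]
    [NormedAddCommGroup α] (A : Matrix m n α) (i : m) (j : n) : ‖A i j‖ ≤ ‖A‖ := by
  rw [← coe_nnnorm, ← coe_nnnorm, NNReal.coe_le_coe, Matrix.linfty_opNNNorm_def]
  exact (Finset.single_le_sum (fun k _ => bot_le) (Finset.mem_univ j)).trans
    (Finset.le_sup (f := fun i => ∑ k, ‖A i k‖₊) (Finset.mem_univ i))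

theorem eq_of_hasDerivAt_zero {f : ℝ → ℝ} (hf : ∀ r, HasDerivAt f 0 r) (t : ℝ) : f t = f 0 :=
  is_const_of_deriv_eq_zero (fun r => (hf r).differentiableAt) (fun r => (hf r).deriv) t 0

theorem eq_cosh_sub_sinh_of_hasDerivAt (s : ℝ) {u v : ℝ → ℝ}
    (hu : ∀ r, HasDerivAt u (-(s ^ 2 * v r)) r) (hv : ∀ r, HasDerivAt v (-u r) r) (t : ℝ) :
    u t = Real.cosh (s * t) * u 0 - s * Real.sinh (s * t) * v 0 := by
  have hmul (r : ℝ) : HasDerivAt (fun x => s * x) s r := by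
    simpa using (hasDerivAt_id r).const_mul s
  have hP : ∀ r, HasDerivAt
      (fun r => Real.cosh (s * r) * u r + s * Real.sinh (s * r) * v r) 0 r := by
    intro r
    refine (((hmul r).cosh.mul (hu r)).add (((hmul r).sinh.const_mul s).mul (hv r))).congr_deriv ?_
    ring
  have hQ : ∀ r, HasDerivAt
      (fun r => Real.sinh (s * r) * u r + s * Real.cosh (s * r) * v r) 0 r := by
    intro r
    refine (((hmul r).sinh.mul (hu r)).add (((hmul r).cosh.const_mul s).mul (hv r))).congr_deriv ?_
    ring
  have hPt := eq_of_hasDerivAt_zero hP t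
  have hQt := eq_of_hasDerivAt_zero hQ t
  simp only [mul_zero, Real.cosh_zero, Real.sinh_zero] at hPt hQt
  linear_combination Real.cosh (s * t) * hPt - Real.sinh (s * t) * hQt
    - u t * Real.cosh_sq_sub_sinh_sq (s * t)

theorem sub_one_div_two_le_sinh {x : ℝ} (hx : 0 ≤ x) : (Real.exp x - 1) / 2 ≤ Real.sinh x := by
  rw [Real.sinh_eq]
  linarith [Real.exp_le_one_iff.2 (neg_nonpos.2 hx)]

theorem apply_zero_one_eq_neg_sinh {ε : ℝ} (hε : 0 < ε) {Y : ℝ → Matrix (Fin 2) (Fin 2) ℝ}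
    (hinit : Y 0 = 1)
    (hode : ∀ (t : ℝ) (i j : Fin 2), HasDerivAt (fun u => Y u i j)
      (ε⁻¹ * (((!![t, -1; t ^ 2, -t] : Matrix (Fin 2) (Fin 2) ℝ) * Y t) i j)) t)
    (t : ℝ) : Y t 0 1 = -(Real.sinh (t / √ε) / √ε) := by
  have hs : ((√ε)⁻¹) ^ 2 = ε⁻¹ := by rw [inv_pow, Real.sq_sqrt hε.le]
  -- With `u = Y₀₁` and `v = Y₁₁ - t Y₀₁`, the second column solves `u' = -v/ε`, `v' = -u`.
  have hu (r : ℝ) : HasDerivAt (fun r => Y r 0 1)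
      (-((√ε)⁻¹ ^ 2 * (Y r 1 1 - r * Y r 0 1))) r := by
    refine (hode r 0 1).congr_deriv ?_
    simp only [hs, Matrix.mul_apply, Fin.sum_univ_two, Matrix.of_apply, Matrix.cons_val_zero,
      Matrix.cons_val_one]
    ring
  have hv (r : ℝ) : HasDerivAt (fun r => Y r 1 1 - r * Y r 0 1) (-Y r 0 1) r := by
    refine ((hode r 1 1).sub ((hasDerivAt_id r).mul (hode r 0 1))).congr_deriv ?_
    simp only [id_eq, Matrix.mul_apply, Fin.sum_univ_two, Matrix.of_apply, Matrix.cons_val_zero,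
      Matrix.cons_val_one]
    ring
  rw [eq_cosh_sub_sinh_of_hasDerivAt _ hu hv t, hinit, Matrix.one_apply_ne zero_ne_one,
    Matrix.one_apply_eq, mul_zero, mul_zero]
  simp only [inv_mul_eq_div]
  ring

/-- For `N(t) = [[t, -1], [t², -t]]`, the solution `Y_ε(t)` of `ε Y' = N(t) Y`, `Y(0) = I`,
satisfies `‖Y_ε(t)‖ ≥ sinh(t/√ε)/√ε` for `t > 0`; in particular `‖Y_ε(t)‖ → ∞` as
`ε → 0⁺` for fixed `t > 0`, growing at least like `(e^{t/√ε} - 1)/(2√ε)`. -/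
theorem stmt8 (Y : ℝ → ℝ → Matrix (Fin 2) (Fin 2) ℝ)
    (hinit : ∀ ε : ℝ, 0 < ε → Y ε 0 = 1)
    (hode : ∀ ε : ℝ, 0 < ε → ∀ (t : ℝ) (i j : Fin 2),
      HasDerivAt (fun u => Y ε u i j)
        (ε⁻¹ * (((!![t, -1; t ^ 2, -t] : Matrix (Fin 2) (Fin 2) ℝ) * Y ε t) i j)) t) :
    ∀ t : ℝ, 0 < t →
      (∀ ε : ℝ, 0 < ε →
        Real.sinh (t / Real.sqrt ε) / Real.sqrt ε ≤ ‖Y ε t‖ ∧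
        (Real.exp (t / Real.sqrt ε) - 1) / (2 * Real.sqrt ε) ≤ ‖Y ε t‖) ∧
      Tendsto (fun ε : ℝ => ‖Y ε t‖) (𝓝[>] (0 : ℝ)) atTop := by
  intro t ht
  have hsinh (ε : ℝ) (hε : 0 < ε) : Real.sinh (t / √ε) / √ε ≤ ‖Y ε t‖ := by
    have h := Matrix.norm_entry_le_linfty_opNorm (Y ε t) 0 1
    rwa [apply_zero_one_eq_neg_sinh hε (hinit ε hε) (hode ε hε), norm_neg,
      Real.norm_of_nonneg (by positivity)] at h
  have hlinear (ε : ℝ) (hε : 0 < ε) : t / ε ≤ ‖Y ε t‖ := calc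
    t / ε = t / √ε / √ε := by rw [div_div, Real.mul_self_sqrt hε.le]
    _ ≤ Real.sinh (t / √ε) / √ε := by gcongr; exact Real.self_le_sinh_iff.2 (by positivity)
    _ ≤ ‖Y ε t‖ := hsinh ε hε
  refine ⟨fun ε hε => ⟨hsinh ε hε, ?_⟩, ?_⟩
  · calc (Real.exp (t / √ε) - 1) / (2 * √ε) = (Real.exp (t / √ε) - 1) / 2 / √ε := by
          rw [div_div]
      _ ≤ Real.sinh (t / √ε) / √ε := by gcongr; exact sub_one_div_two_le_sinh (by positivity)
      _ ≤ ‖Y ε t‖ := hsinh ε hε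
  · refine tendsto_atTop_mono' _ (eventually_nhdsWithin_of_forall hlinear) ?_
    exact (tendsto_inv_nhdsGT_zero.const_mul_atTop ht).congr fun ε => (div_eq_mul_inv t ε).symm
end

section
/- Under the assumptions of the Duhamel formula, if additionally ‖T(t,s)‖ ≤ M e^{∫_s^t ω(u) du} for a constant M ≥ 1 and an integrable real function ω, then ‖S(t,r)‖ ≤ M e^{∫_r^t (ω(u) + M ‖B(u)‖) du} for all r ≤ t. -/
/-!
For `φ` in the dense core `D`, differentiating `s ↦ T(t,s) S(s,r) φ` gives Duhamel's formula
`S(t,r) φ = T(t,r) φ - i ∫_r^t T(t,s) B(s) S(s,r) φ ds`; the strong continuity of `s ↦ T(t,s)`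
that this needs follows from the locally uniform bound on `‖T(t,s)‖` by density. Taking norms,
`f(x) = e^{-∫_r^x ω} ‖S(x,r) φ‖` satisfies `f(x) ≤ M ‖φ‖ + ∫_r^x M ‖B(s)‖ f(s) ds`, and Gronwall's
lemma (whose iteration is the termwise estimate of the Dyson series) gives
`f(t) ≤ M ‖φ‖ e^{∫_r^t M ‖B‖}`.
-/

open intervalIntegral

open MeasureTheory Set Filter Topology

theorem LipschitzOnWith.comp_absolutelyContinuousOnInterval {X Y : Type*}
    [PseudoMetricSpace X] [PseudoMetricSpace Y] {f : ℝ → X} {g : X → Y} {K : NNReal} {s : Set X}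
    {a b : ℝ} (hg : LipschitzOnWith K g s) (hf : AbsolutelyContinuousOnInterval f a b)
    (hfs : MapsTo f (uIcc a b) s) : AbsolutelyContinuousOnInterval (g ∘ f) a b := by
  rw [absolutelyContinuousOnInterval_iff] at hf ⊢
  intro ε hε
  obtain ⟨δ, hδ, hfδ⟩ := hf (ε / (K + 1)) (by positivity)
  refine ⟨δ, hδ, fun E hE hEδ => ?_⟩
  calc ∑ i ∈ Finset.range E.1, dist (g (f (E.2 i).1)) (g (f (E.2 i).2))
      ≤ ∑ i ∈ Finset.range E.1, K * dist (f (E.2 i).1) (f (E.2 i).2) :=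
        Finset.sum_le_sum fun i hi =>
          hg.dist_le_mul _ (hfs (hE.1 i hi).1) _ (hfs (hE.1 i hi).2)
    _ ≤ K * (ε / (K + 1)) := by
        rw [← Finset.mul_sum]; gcongr; exact (hfδ E hE hEδ).le
    _ < ε := by
        rw [mul_div_assoc', div_lt_iff₀ (by positivity)]
        nlinarith

theorem ContDiff.comp_absolutelyContinuousOnInterval {F : Type*} [NormedAddCommGroup F]
    [NormedSpace ℝ F] {f : ℝ → ℝ} {g : ℝ → F} {a b : ℝ} (hg : ContDiff ℝ 1 g)
    (hf : AbsolutelyContinuousOnInterval f a b) :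
    AbsolutelyContinuousOnInterval (g ∘ f) a b := by
  obtain ⟨C, hC⟩ := hf.exists_bound
  obtain ⟨K, hK⟩ := hg.contDiffOn.exists_lipschitzOnWith one_ne_zero
    (convex_closedBall 0 C) (isCompact_closedBall 0 C)
  exact hK.comp_absolutelyContinuousOnInterval hf fun x hx => mem_closedBall_zero_iff.2 (hC x hx)

theorem le_mul_exp_integral_of_le_add_integral {β f : ℝ → ℝ} {a b C : ℝ} (hab : a ≤ b)
    (hβ : IntervalIntegrable β volume a b) (hβ0 : ∀ x ∈ Icc a b, 0 ≤ β x)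
    (hf : ContinuousOn f (Icc a b)) (hle : ∀ x ∈ Icc a b, f x ≤ C + ∫ s in a..x, β s * f s) :
    f b ≤ C * Real.exp (∫ s in a..b, β s) := by
  set I : ℝ → ℝ := fun x => ∫ s in a..x, β s
  set F : ℝ → ℝ := fun x => ∫ s in a..x, β s * f s
  set E : ℝ → ℝ := fun x => Real.exp (-I x)
  have hβf : IntervalIntegrable (fun s => β s * f s) volume a b :=
    hβ.mul_continuousOn (by rwa [uIcc_of_le hab])
  have hI := hβ.absolutelyContinuousOnInterval_intervalIntegral left_mem_uIcc
  have hF := hβf.absolutelyContinuousOnInterval_intervalIntegral left_mem_uIcc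
  have hE : AbsolutelyContinuousOnInterval E a b :=
    Real.contDiff_exp.comp_absolutelyContinuousOnInterval hI.neg
  -- `C E + E F` is nonincreasing: its derivative is `β E (f - C - F) ≤ 0` almost everywhere.
  set G : ℝ → ℝ := fun x => C * E x + E x * F x
  have hG : AbsolutelyContinuousOnInterval G a b := (hE.const_mul C).add (hE.mul hF)
  have hderiv : deriv G ≤ᵐ[volume.restrict (Icc a b)] fun _ => 0 := by
    rw [EventuallyLE, ae_restrict_iff' measurableSet_Icc]
    filter_upwards [hβ.ae_hasDerivAt_integral, hβf.ae_hasDerivAt_integral] with x hIx hFx hx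
    have hxu : x ∈ uIcc a b := by rwa [uIcc_of_le hab]
    have hEx : HasDerivAt E (E x * -β x) x := (hIx hxu a left_mem_uIcc).neg.exp
    have hGx : HasDerivAt G _ x := (hEx.const_mul C).add (hEx.mul (hFx hxu a left_mem_uIcc))
    rw [hGx.deriv]
    have hfx : f x - (C + F x) ≤ 0 := sub_nonpos.2 (hle x hx)
    calc C * (E x * -β x) + (E x * -β x * F x + E x * (β x * f x))
        = E x * β x * (f x - (C + F x)) := by ring
      _ ≤ 0 := mul_nonpos_of_nonneg_of_nonpos (mul_nonneg (Real.exp_pos _).le (hβ0 x hx)) hfx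
  have hmono := integral_mono_ae_restrict hab hG.intervalIntegrable_deriv
    intervalIntegrable_const hderiv
  have hGa : G a = C := by simp [G, E, I, F]
  rw [hG.integral_deriv_eq_sub, hGa, intervalIntegral.integral_zero, sub_nonpos] at hmono
  have hexp : Real.exp (-I b) * Real.exp (I b) = 1 := by
    rw [← Real.exp_add, neg_add_cancel, Real.exp_zero]
  calc f b ≤ C + F b := hle b (right_mem_Icc.2 hab)
    _ = G b * Real.exp (I b) := by linear_combination (C + F b) * hexp.symm
    _ ≤ C * Real.exp (I b) := by gcongr

section OperatorFamilies

variable {𝕜 E F : Type*} [NontriviallyNormedField 𝕜] [NormedAddCommGroup E] [NormedSpace 𝕜 E]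
  [NormedAddCommGroup F] [NormedSpace 𝕜 F]

theorem ContinuousLinearMap.opNorm_le_of_dense {L : E →L[𝕜] F} {D : Set E} {c : ℝ}
    (hD : Dense D) (hc : 0 ≤ c) (hL : ∀ x ∈ D, ‖L x‖ ≤ c * ‖x‖) : ‖L‖ ≤ c :=
  L.opNorm_le_bound hc (hD.induction hL (isClosed_le (by fun_prop) (by fun_prop)))

theorem continuousOn_clm_apply_of_dense {α : Type*} [TopologicalSpace α] {T : α → E →L[𝕜] F}
    {s : Set α} {D : Set E} {C : ℝ} (hD : Dense D) (hT : ∀ u ∈ s, ‖T u‖ ≤ C)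
    (hTD : ∀ x ∈ D, ContinuousOn (fun u => T u x) s) (x : E) :
    ContinuousOn (fun u => T u x) s := by
  have hequi : Equicontinuous ((↑) ∘ fun u : s => T u) :=
    ((NormedSpace.equicontinuous_TFAE fun u : s => T u).out 1 5).2
      (⟨C, fun u => hT u u.2⟩ : ∃ C, ∀ u : s, ‖T u‖ ≤ C)
  refine continuousOn_iff_continuous_domRestrict.2 (continuous_iff_continuousAt.2 fun u => ?_)
  refine hD.induction (P := fun x => Tendsto (fun v : s => T v x) (𝓝 u) (𝓝 (T u x)))
    (fun y hy => ?_) (Equicontinuous.isClosed_setOfPred_tendsto hequi (T u).continuous) x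
  exact (continuousOn_iff_continuous_domRestrict.1 (hTD y hy)).continuousAt

theorem Filter.Tendsto.clm_apply_of_norm_le {α : Type*} {l : Filter α} {T : α → E →L[𝕜] F}
    {v : α → E} {x : E} {y : F} {C : ℝ} (hv : Tendsto v l (𝓝 x)) (hT : ∀ᶠ u in l, ‖T u‖ ≤ C)
    (hTx : Tendsto (fun u => T u x) l (𝓝 y)) : Tendsto (fun u => T u (v u)) l (𝓝 y) := by
  have hsmall : Tendsto (fun u => T u (v u - x)) l (𝓝 0) := by
    refine squeeze_zero_norm' ?_ (by simpa using (tendsto_norm_sub_self x |>.comp hv).const_mul C)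
    filter_upwards [hT] with u hu
    exact (T u).le_of_opNorm_le hu _
  simpa using hsmall.add hTx

variable [NormedSpace ℝ E] [NormedSpace ℝ F] [LinearMap.CompatibleSMul E F ℝ 𝕜]

theorem HasDerivWithinAt.clm_apply_of_norm_le {T : ℝ → E →L[𝕜] F} {ψ : ℝ → E} {ψ' : E} {T' : F}
    {s : Set ℝ} {x C : ℝ} (hψ : HasDerivWithinAt ψ ψ' s x)
    (hT : HasDerivWithinAt (fun u => T u (ψ x)) T' s x) (hTC : ∀ u ∈ s, ‖T u‖ ≤ C)
    (hTψ' : ContinuousWithinAt (fun u => T u ψ') s x) :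
    HasDerivWithinAt (fun u => T u (ψ u)) (T x ψ' + T') s x := by
  rw [hasDerivWithinAt_iff_tendsto_slope] at hψ hT ⊢
  have hslope : slope (fun u => T u (ψ u)) x
      = fun u => T u (slope ψ x u) + slope (fun u => T u (ψ x)) x u := by
    ext u
    simp only [slope, vsub_eq_sub, ContinuousLinearMap.map_smul_of_tower, map_sub, ← smul_add,
      sub_add_sub_cancel]
  rw [hslope]
  have hTC' : ∀ᶠ u in 𝓝[s \ {x}] x, ‖T u‖ ≤ C :=
    eventually_nhdsWithin_of_forall fun u hu => hTC u hu.1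
  exact (hψ.clm_apply_of_norm_le hTC' (hTψ'.mono sdiff_subset)).add hT

theorem apply_eq_apply_add_integral_of_hasDerivAt [CompleteSpace F] {U : ℝ → E →L[𝕜] F}
    {G : ℝ → E →ₗ[𝕜] E} {ψ f : ℝ → E} {D : Set E} {a b C : ℝ} (hD : Dense D) (hab : a ≤ b)
    (hUC : ∀ s ∈ Icc a b, ‖U s‖ ≤ C)
    (hU : ∀ x ∈ D, ∀ s ∈ Icc a b, HasDerivAt (fun u => U u x) (U s (G s x)) s)
    (hψD : ∀ s ∈ Icc a b, ψ s ∈ D) (hψ : ∀ s ∈ Icc a b, HasDerivAt ψ (-G s (ψ s) + f s) s)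
    (hf : ContinuousOn (fun s => U s (f s)) (Icc a b)) :
    U b (ψ b) = U a (ψ a) + ∫ s in a..b, U s (f s) := by
  have hUx : ∀ x, ContinuousOn (fun u => U u x) (Icc a b) :=
    continuousOn_clm_apply_of_dense hD hUC fun x hx s hs =>
      (hU x hx s hs).continuousAt.continuousWithinAt
  have hderiv : ∀ s ∈ Icc a b,
      HasDerivWithinAt (fun u => U u (ψ u)) (U s (f s)) (Icc a b) s := by
    intro s hs
    convert (hψ s hs).hasDerivWithinAt.clm_apply_of_norm_le
      (hU _ (hψD s hs) s hs).hasDerivWithinAt hUC (hUx _ s hs) using 1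
    rw [map_add, map_neg]
    abel
  have hftc := integral_eq_sub_of_hasDeriv_right_of_le hab
    (fun s hs => (hderiv s hs).continuousWithinAt)
    (fun s hs => ((hderiv s (Ioo_subset_Icc_self hs)).hasDerivAt
      (Icc_mem_nhds hs.1 hs.2)).hasDerivWithinAt) (hf.intervalIntegrable_of_Icc hab)
  rw [hftc]
  abel

end OperatorFamilies

section Perturbation

variable {𝕜 E F : Type*} [NontriviallyNormedField 𝕜] [NormedAddCommGroup E] [NormedSpace 𝕜 E]
  [NormedAddCommGroup F] [NormedSpace 𝕜 F]

theorem exists_norm_le_of_norm_le_mul_exp_integral {U : ℝ → E →L[𝕜] F} {ω : ℝ → ℝ} {a b M : ℝ}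
    (hω : IntervalIntegrable ω volume a b)
    (hU : ∀ s ∈ Icc a b, ‖U s‖ ≤ M * Real.exp (∫ u in s..b, ω u)) :
    ∃ C, ∀ s ∈ Icc a b, ‖U s‖ ≤ C := by
  have hcont : ContinuousOn (fun s => M * Real.exp (∫ u in s..b, ω u)) (uIcc a b) :=
    continuousOn_const.mul (continuousOn_primitive_interval_left
      ((intervalIntegrable_iff' (by finiteness)).1 hω)).rexp
  obtain ⟨C, hC⟩ := isCompact_uIcc.exists_bound_of_continuousOn hcont
  exact ⟨C, fun s hs => (hU s hs).trans ((Real.le_norm_self _).trans (hC s (Icc_subset_uIcc hs)))⟩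

theorem norm_le_mul_exp_integral_of_eq_add_integral [NormedSpace ℝ E] [CompleteSpace E]
    {T : ℝ → ℝ → E →L[𝕜] E} {ψ g : ℝ → E} {ω β : ℝ → ℝ} {r t M : ℝ} (hrt : r ≤ t) (hM : 0 ≤ M)
    (hω : IntervalIntegrable ω volume r t) (hβ : IntervalIntegrable β volume r t)
    (hβ0 : ∀ s ∈ Icc r t, 0 ≤ β s)
    (hT : ∀ s ∈ Icc r t, ∀ x ∈ Icc s t, ‖T x s‖ ≤ M * Real.exp (∫ u in s..x, ω u))
    (hψ : ContinuousOn ψ (Icc r t)) (hg : ∀ s ∈ Icc r t, ‖g s‖ ≤ β s * ‖ψ s‖)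
    (hduh : ∀ x ∈ Icc r t, ψ x = T x r (ψ r) + ∫ s in r..x, T x s (g s)) :
    ‖ψ t‖ ≤ M * Real.exp (∫ u in r..t, (ω u + M * β u)) * ‖ψ r‖ := by
  set Ω : ℝ → ℝ := fun x => ∫ u in r..x, ω u
  have hΩ : ContinuousOn Ω (Icc r t) := by
    simpa only [uIcc_of_le hrt] using continuousOn_primitive_interval' hω left_mem_uIcc
  have hsub : ∀ a ∈ Icc r t, ∀ b ∈ Icc r t, IntervalIntegrable ω volume a b := fun a ha b hb =>
    hω.mono_set (uIcc_subset_uIcc (uIcc_of_le hrt ▸ ha) (uIcc_of_le hrt ▸ hb))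
  have hr : r ∈ Icc r t := left_mem_Icc.2 hrt
  set f : ℝ → ℝ := fun x => Real.exp (-Ω x) * ‖ψ x‖
  have hf : ContinuousOn f (Icc r t) := hΩ.neg.rexp.mul hψ.norm
  have hle : ∀ x ∈ Icc r t, f x ≤ M * ‖ψ r‖ + ∫ s in r..x, M * β s * f s := by
    intro x hx
    have hrx : Icc r x ⊆ Icc r t := Icc_subset_Icc_right hx.2
    have hβf : IntervalIntegrable (fun s => M * β s * f s) volume r x :=
      ((hβ.mono_set (uIcc_subset_uIcc_left (uIcc_of_le hrt ▸ hx))).const_mul M).mul_continuousOn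
        (uIcc_of_le hx.1 ▸ hf.mono hrx)
    have hTr : ‖T x r (ψ r)‖ ≤ Real.exp (Ω x) * (M * ‖ψ r‖) := by
      calc ‖T x r (ψ r)‖ ≤ M * Real.exp (Ω x) * ‖ψ r‖ :=
            (T x r).le_of_opNorm_le (hT r hr x hx) _
        _ = Real.exp (Ω x) * (M * ‖ψ r‖) := by ring
    have hint : ‖∫ s in r..x, T x s (g s)‖ ≤ Real.exp (Ω x) * ∫ s in r..x, M * β s * f s := by
      rw [← intervalIntegral.integral_const_mul]
      refine norm_integral_le_of_norm_le hx.1 (ae_of_all _ fun s hs => ?_) (hβf.const_mul _)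
      have hs' : s ∈ Icc r t := hrx (Ioc_subset_Icc_self hs)
      have hΩs : ∫ u in s..x, ω u = Ω x - Ω s :=
        (integral_interval_sub_left (hsub r hr x hx) (hsub r hr s hs')).symm
      calc ‖T x s (g s)‖ ≤ M * Real.exp (∫ u in s..x, ω u) * (β s * ‖ψ s‖) :=
            (T x s).le_of_opNorm_le_of_le (hT s hs' x ⟨hs.2, hx.2⟩) (hg s hs')
        _ = Real.exp (Ω x) * (M * β s * f s) := by
            rw [hΩs, Real.exp_sub]
            simp only [f, Real.exp_neg]
            field_simp
    calc f x ≤ Real.exp (-Ω x) * (Real.exp (Ω x) * (M * ‖ψ r‖)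
          + Real.exp (Ω x) * ∫ s in r..x, M * β s * f s) := by
          simp only [f]
          rw [hduh x hx]
          gcongr
          exact (norm_add_le _ _).trans (add_le_add hTr hint)
      _ = M * ‖ψ r‖ + ∫ s in r..x, M * β s * f s := by
          rw [← mul_add, ← mul_assoc, ← Real.exp_add, neg_add_cancel, Real.exp_zero, one_mul]
  have hgron := le_mul_exp_integral_of_le_add_integral hrt (hβ.const_mul M)
    (fun s hs => mul_nonneg hM (hβ0 s hs)) hf hle
  calc ‖ψ t‖ = Real.exp (Ω t) * f t := by
        simp only [f, ← mul_assoc, ← Real.exp_add, add_neg_cancel, Real.exp_zero, one_mul]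
    _ ≤ Real.exp (Ω t) * (M * ‖ψ r‖ * Real.exp (∫ s in r..t, M * β s)) := by gcongr
    _ = M * Real.exp (∫ u in r..t, (ω u + M * β u)) * ‖ψ r‖ := by
        rw [integral_add hω (hβ.const_mul M), Real.exp_add]
        ring

end Perturbation

theorem stmt10_general {X : Type*} [NormedAddCommGroup X] [NormedSpace ℂ X] [CompleteSpace X]
    (D : Submodule ℂ X) (hDdense : Dense (D : Set X))
    (A : ℝ → X →ₗ[ℂ] X) (B : ℝ → X →L[ℂ] X)
    (T S : ℝ → ℝ → X →L[ℂ] X)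
    (hSD : ∀ t s : ℝ, ∀ φ ∈ D, S t s φ ∈ D)
    (hTinit : ∀ s : ℝ, T s s = 1) (hSinit : ∀ s : ℝ, S s s = 1)
    (hT' : ∀ φ ∈ D, ∀ t s : ℝ,
      HasDerivAt (fun u => T t u φ) (Complex.I • T t s (A s φ)) s)
    (hS : ∀ φ ∈ D, ∀ r t : ℝ,
      HasDerivAt (fun u => S u r φ)
        (-Complex.I • (A t (S t r φ) + B t (S t r φ))) t)
    (hcont : ∀ φ ∈ D, ∀ t r : ℝ,
      Continuous fun s => T t s (B s (S s r φ)))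
    (M : ℝ) (hM : 1 ≤ M) (ω : ℝ → ℝ)
    (hω : ∀ r t : ℝ, r ≤ t → IntervalIntegrable ω MeasureTheory.volume r t)
    (hB : ∀ r t : ℝ, r ≤ t →
      IntervalIntegrable (fun u => ‖B u‖) MeasureTheory.volume r t)
    (hTbound : ∀ s t : ℝ, s ≤ t → ‖T t s‖ ≤ M * Real.exp (∫ u in s..t, ω u)) :
    ∀ r t : ℝ, r ≤ t →
      ‖S t r‖ ≤ M * Real.exp (∫ u in r..t, (ω u + M * ‖B u‖)) := by
  intro r t hrt
  have hM0 : 0 ≤ M := zero_le_one.trans hM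
  refine (S t r).opNorm_le_of_dense hDdense (by positivity) fun φ hφ => ?_
  set ψ : ℝ → X := fun s => S s r φ
  have hψ : ∀ s, HasDerivAt ψ (-(Complex.I • A s) (ψ s) + -Complex.I • B s (ψ s)) s := by
    intro s
    simpa [smul_add] using hS φ hφ r s
  have hduh : ∀ x ∈ Icc r t,
      ψ x = T x r (ψ r) + ∫ s in r..x, T x s (-Complex.I • B s (ψ s)) := by
    intro x hx
    obtain ⟨C, hC⟩ := exists_norm_le_of_norm_le_mul_exp_integral (hω r x hx.1)
      fun s hs => hTbound s x hs.2
    have := apply_eq_apply_add_integral_of_hasDerivAt (G := fun s => Complex.I • A s) hDdense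
      hx.1 hC (fun y hy s _ => by simpa using hT' y hy x s) (fun s _ => hSD s r φ hφ)
      (fun s _ => hψ s)
      (((hcont φ hφ x r).const_smul (-Complex.I)).congr fun s => by simp [ψ]).continuousOn
    simpa [hTinit] using this
  have := norm_le_mul_exp_integral_of_eq_add_integral hrt hM0 (hω r t hrt)
    (hB r t hrt) (fun _ _ => norm_nonneg _) (fun s _ x hx => hTbound s x hx.1)
    (continuous_iff_continuousAt.2 fun s => (hψ s).continuousAt).continuousOn
    (fun s _ => by simpa [norm_smul] using (B s).le_opNorm (ψ s)) hduh
  simpa [ψ, hSinit] using this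

/-- Under the assumptions of the Duhamel formula, if moreover
`‖T(t,s)‖ ≤ M e^{∫_s^t ω(u) du}` for a constant `M ≥ 1` and an integrable real
function `ω`, then `‖S(t,r)‖ ≤ M e^{∫_r^t (ω(u) + M ‖B(u)‖) du}` for all `r ≤ t`. -/
theorem stmt10 {X : Type*} [NormedAddCommGroup X] [NormedSpace ℂ X] [CompleteSpace X]
    (D : Submodule ℂ X) (hDdense : Dense (D : Set X))
    (A : ℝ → X →ₗ[ℂ] X) (B : ℝ → X →L[ℂ] X)
    (hBcont : ∀ φ : X, Continuous fun t => B t φ)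
    (T S : ℝ → ℝ → X →L[ℂ] X)
    (hTD : ∀ t s : ℝ, ∀ φ ∈ D, T t s φ ∈ D)
    (hSD : ∀ t s : ℝ, ∀ φ ∈ D, S t s φ ∈ D)
    (hTinit : ∀ s : ℝ, T s s = 1) (hSinit : ∀ s : ℝ, S s s = 1)
    (hT : ∀ φ ∈ D, ∀ s t : ℝ,
      HasDerivAt (fun u => T u s φ) (-Complex.I • A t (T t s φ)) t)
    (hT' : ∀ φ ∈ D, ∀ t s : ℝ,
      HasDerivAt (fun u => T t u φ) (Complex.I • T t s (A s φ)) s)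
    (hS : ∀ φ ∈ D, ∀ r t : ℝ,
      HasDerivAt (fun u => S u r φ)
        (-Complex.I • (A t (S t r φ) + B t (S t r φ))) t)
    (hcont : ∀ φ ∈ D, ∀ t r : ℝ,
      Continuous fun s => T t s (B s (S s r φ)))
    (M : ℝ) (hM : 1 ≤ M) (ω : ℝ → ℝ)
    (hω : ∀ r t : ℝ, r ≤ t → IntervalIntegrable ω MeasureTheory.volume r t)
    (hB : ∀ r t : ℝ, r ≤ t →
      IntervalIntegrable (fun u => ‖B u‖) MeasureTheory.volume r t)
    (hTbound : ∀ s t : ℝ, s ≤ t → ‖T t s‖ ≤ M * Real.exp (∫ u in s..t, ω u)) :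
    ∀ r t : ℝ, r ≤ t →
      ‖S t r‖ ≤ M * Real.exp (∫ u in r..t, (ω u + M * ‖B u‖)) :=
  stmt10_general D hDdense A B T S hSD hTinit hSinit hT' hS hcont M hM ω hω hB hTbound
end

section
/- Let K : [0,1] → bounded operators be continuous and let W(t) solve i W'(t) = K(t) W(t), W(0) = I. Suppose P_k(t), k = 0,…,n, are C^1 families of projections with Σ_k P_k(t) = I, P_j(t)P_k(t) = δ_{jk}P_j(t), and K(t) = i Σ_k P_k'(t) P_k(t). Then W(t) intertwines the projections: W(t) P_k(0) = P_k(t) W(t) for all t ∈ [0,1] and all k. -/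
/-!
Write `A(t) = Σ_k P_k'(t) P_k(t)`, so that `W' = A W`. Differentiating `P_j P_k = δ_{jk} P_j`
and using `Σ_k P_k = 1` gives the Lax equation `P_k' = A P_k - P_k A`. Then
`D(t) = P_k(t) W(t) - W(t) P_k(0)` solves the linear equation `D' = A D` with `D(0) = 0`,
so `D` vanishes by Grönwall's inequality.
-/

open Set

theorem deriv_mul_add_mul_deriv_eq_ite_of_mul_eq_ite {𝔸 : Type*} [NormedRing 𝔸]
    [NormedAlgebra ℝ 𝔸] {ι : Type*} [DecidableEq ι] {P P' : ι → ℝ → 𝔸}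
    (hP : ∀ k t, HasDerivAt (P k) (P' k t) t)
    (hmul : ∀ j k t, P j t * P k t = if j = k then P j t else 0) (j k : ι) (t : ℝ) :
    P' j t * P k t + P j t * P' k t = if j = k then P' j t else 0 := by
  have hite : HasDerivAt (fun s => if j = k then P j s else 0) (if j = k then P' j t else 0) t := by
    split_ifs
    exacts [hP j t, hasDerivAt_const t 0]
  have hprod : P j * P k = fun s => if j = k then P j s else 0 := funext (hmul j k)
  exact ((hP j t).mul (hP k t)).unique (hprod ▸ hite)

theorem sum_mul_mul_sub_mul_sum_eq {R ι : Type*} [Ring R] [Fintype ι] [DecidableEq ι]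
    {p q : ι → R} (hsum : ∑ j, p j = 1) (hmul : ∀ j k, p j * p k = if j = k then p j else 0)
    (hderiv : ∀ j k, q j * p k + p j * q k = if j = k then q j else 0) (k : ι) :
    (∑ j, q j * p j) * p k - p k * ∑ j, q j * p j = q k := by
  have hleft : (∑ j, q j * p j) * p k = q k * p k := by
    simp only [Finset.sum_mul, mul_assoc, hmul, mul_ite, mul_zero, Finset.sum_ite_eq',
      Finset.mem_univ, if_true]
  have hterm : ∀ j, p k * (q j * p j) = (if k = j then q k * p k else 0) - q k * p j := by
    intro j
    rw [← mul_assoc, eq_sub_of_add_eq' (hderiv k j), sub_mul, mul_assoc, hmul j j, if_pos rfl]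
    split_ifs with hkj
    · subst hkj; rfl
    · rw [zero_mul]
  have hright : p k * ∑ j, q j * p j = q k * p k - q k := by
    rw [Finset.mul_sum, Finset.sum_congr rfl fun j _ => hterm j, Finset.sum_sub_distrib,
      Finset.sum_ite_eq, if_pos (Finset.mem_univ k), ← Finset.mul_sum, hsum, mul_one]
  rw [hleft, hright, sub_sub_cancel]

theorem eq_zero_of_hasDerivWithinAt_mul_left {𝔸 : Type*} [NormedRing 𝔸] [NormedSpace ℝ 𝔸]
    {A D : ℝ → 𝔸} {a b : ℝ} (hA : ContinuousOn A (Icc a b)) (hD : ContinuousOn D (Icc a b))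
    (hD' : ∀ t ∈ Ico a b, HasDerivWithinAt D (A t * D t) (Ici t) t) (ha : D a = 0) :
    ∀ t ∈ Icc a b, D t = 0 := by
  obtain ⟨C, hC⟩ := isCompact_Icc.exists_bound_of_continuousOn hA
  refine eq_zero_of_abs_deriv_le_mul_abs_self_of_eq_zero_right (K := C) hD hD' ha fun t ht => ?_
  calc ‖A t * D t‖ ≤ ‖A t‖ * ‖D t‖ := norm_mul_le _ _
    _ ≤ C * ‖D t‖ := mul_le_mul_of_nonneg_right (hC t (Ico_subset_Icc_self ht)) (norm_nonneg _)

theorem mul_eq_mul_of_hasDerivAt_eq_commutator {𝔸 : Type*} [NormedRing 𝔸] [NormedAlgebra ℝ 𝔸]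
    {A P P' W : ℝ → 𝔸} {a b : ℝ} (hA : ContinuousOn A (Icc a b))
    (hP : ∀ t, HasDerivAt P (P' t) t) (hP' : ∀ t, P' t = A t * P t - P t * A t)
    (hW : ∀ t, HasDerivAt W (A t * W t) t) (hWa : W a = 1) :
    ∀ t ∈ Icc a b, W t * P a = P t * W t := by
  have hD : ∀ t, HasDerivAt (fun s => P s * W s - W s * P a) (A t * (P t * W t - W t * P a)) t := by
    intro t
    refine (((hP t).mul (hW t)).sub ((hW t).mul_const (P a))).congr_deriv ?_
    rw [hP']
    noncomm_ring
  intro t ht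
  exact (sub_eq_zero.mp (eq_zero_of_hasDerivWithinAt_mul_left hA
    (fun s _ => (hD s).continuousAt.continuousWithinAt)
    (fun s _ => (hD s).hasDerivWithinAt) (by simp [hWa]) t ht)).symm

/-- Kato's intertwining lemma: if `W` solves `i W' = K(t) W`, `W(0) = I`, where
`K(t) = i Σ_k P_k'(t) P_k(t)` for a `C¹` family of mutually orthogonal projections
`P_k(t)` summing to the identity, then `W(t) P_k(0) = P_k(t) W(t)` for all
`t ∈ [0,1]` and all `k`. -/
theorem stmt18 {X : Type*} [NormedAddCommGroup X] [NormedSpace ℂ X]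
    (n : ℕ) (P P' : Fin (n + 1) → ℝ → X →L[ℂ] X)
    (hP : ∀ k t, HasDerivAt (P k) (P' k t) t)
    (hP' : ∀ k, Continuous (P' k))
    (hsum : ∀ t : ℝ, ∑ k, P k t = 1)
    (horth : ∀ j k, ∀ t : ℝ, P j t * P k t = if j = k then P j t else 0)
    (K : ℝ → X →L[ℂ] X)
    (hK : ∀ t : ℝ, K t = Complex.I • ∑ k, P' k t * P k t)
    (W : ℝ → X →L[ℂ] X)
    (hW0 : W 0 = 1)
    (hW : ∀ t : ℝ, HasDerivAt W (-Complex.I • (K t * W t)) t) :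
    ∀ t ∈ Set.Icc (0 : ℝ) 1, ∀ k, W t * P k 0 = P k t * W t := by
  intro t ht k
  set A : ℝ → X →L[ℂ] X := fun s => ∑ j, P' j s * P j s
  have hW' : ∀ s, HasDerivAt W (A s * W s) s := fun s => by
    simpa only [hK, smul_mul_assoc, smul_smul, neg_mul, Complex.I_mul_I, neg_neg, one_smul]
      using hW s
  have hA : Continuous A := continuous_finsetSum _ fun j _ =>
    (hP' j).mul (continuous_iff_continuousAt.mpr fun s => (hP j s).continuousAt)
  have hLax : ∀ s, P' k s = A s * P k s - P k s * A s := fun s =>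
    (sum_mul_mul_sub_mul_sum_eq (hsum s) (horth · · s)
      (deriv_mul_add_mul_deriv_eq_ite_of_mul_eq_ite hP horth · · s) k).symm
  exact mul_eq_mul_of_hasDerivAt_eq_commutator hA.continuousOn (hP k) hLax hW' hW0 t ht
end
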